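/- Let Ω ⊆ ℝ³ be a bounded measurable set and B : ℝ³ → ℝ³ an integrable vector field vanishing outside Ω, and let A be the Biot–Savart vector potential of B. Then A(x) tends to 0 as ‖x‖ → ∞; that is, the function A tends to 0 along the cocompact filter (Filter.cocompact) on ℝ³. -/

import Mathlib

open MeasureTheory Filter Topology Metric

noncomputable section

def cross3 (u v : EuclideanSpace ℝ (Fin 3)) : EuclideanSpace ℝ (Fin 3) :=
  (WithLp.equiv 2 (Fin 3 → ℝ)).symm
    ![u 1 * v 2 - u 2 * v 1, u 2 * v 0 - u 0 * v 2, u 0 * v 1 - u 1 * v 0]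

def biotSavart (Ω : Set (EuclideanSpace ℝ (Fin 3)))
    (B : EuclideanSpace ℝ (Fin 3) → EuclideanSpace ℝ (Fin 3))
    (x : EuclideanSpace ℝ (Fin 3)) : EuclideanSpace ℝ (Fin 3) :=
  (1 / (4 * Real.pi)) • ∫ y in Ω, (‖x - y‖ ^ 3)⁻¹ • cross3 (B y) (x - y)

local notation "ℝ³" => EuclideanSpace ℝ (Fin 3)

lemma norm_eq_sqrt_sum_three (w : ℝ³) : ‖w‖ = Real.sqrt (w 0 ^ 2 + w 1 ^ 2 + w 2 ^ 2) := by
  simp [EuclideanSpace.norm_eq, Fin.sum_univ_three, sq]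

-- Lagrange's identity: ‖u × v‖² = ‖u‖²‖v‖² - ⟪u, v⟫².
lemma norm_cross3_le (u v : ℝ³) : ‖cross3 u v‖ ≤ ‖u‖ * ‖v‖ := by
  rw [norm_eq_sqrt_sum_three, norm_eq_sqrt_sum_three, norm_eq_sqrt_sum_three,
    ← Real.sqrt_mul (by positivity)]
  apply Real.sqrt_le_sqrt
  change (u 1 * v 2 - u 2 * v 1) ^ 2 + (u 2 * v 0 - u 0 * v 2) ^ 2 + (u 0 * v 1 - u 1 * v 0) ^ 2
    ≤ _
  nlinarith [sq_nonneg (u 0 * v 0 + u 1 * v 1 + u 2 * v 2)]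

lemma norm_biotSavart_integrand_le (b x y : ℝ³) :
    ‖(‖x - y‖ ^ 3)⁻¹ • cross3 b (x - y)‖ ≤ ‖b‖ / ‖x - y‖ ^ 2 := by
  rcases eq_or_ne x y with rfl | hxy
  · simp
  have hpos : 0 < ‖x - y‖ := norm_pos_iff.2 (sub_ne_zero.2 hxy)
  calc ‖(‖x - y‖ ^ 3)⁻¹ • cross3 b (x - y)‖
      ≤ (‖x - y‖ ^ 3)⁻¹ * (‖b‖ * ‖x - y‖) := by
        rw [norm_smul, norm_inv, norm_pow, norm_norm]
        gcongr
        exact norm_cross3_le _ _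
    _ = ‖b‖ / ‖x - y‖ ^ 2 := by field_simp

lemma norm_biotSavart_le {Ω : Set ℝ³} (hΩ : MeasurableSet Ω) {R : ℝ}
    (hR : Ω ⊆ closedBall 0 R) {B : ℝ³ → ℝ³} (hB : Integrable B) {x : ℝ³} (hx : R < ‖x‖) :
    ‖biotSavart Ω B x‖ ≤ 1 / (4 * Real.pi) * ((∫ y, ‖B y‖) / (‖x‖ - R) ^ 2) := by
  have hbound : ∀ y ∈ Ω,
      ‖(‖x - y‖ ^ 3)⁻¹ • cross3 (B y) (x - y)‖ ≤ ‖B y‖ / (‖x‖ - R) ^ 2 := by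
    intro y hy
    have hyR : ‖y‖ ≤ R := by simpa using hR hy
    have hdist : ‖x‖ - R ≤ ‖x - y‖ := by linarith [norm_sub_norm_le x y]
    refine (norm_biotSavart_integrand_le _ _ _).trans ?_
    gcongr
  have hint : ‖∫ y in Ω, (‖x - y‖ ^ 3)⁻¹ • cross3 (B y) (x - y)‖ ≤
      (∫ y, ‖B y‖) / (‖x‖ - R) ^ 2 :=
    calc _ ≤ ∫ y in Ω, ‖B y‖ / (‖x‖ - R) ^ 2 :=
          norm_integral_le_of_norm_le (hB.norm.div_const _).restrict
            ((ae_restrict_iff' hΩ).2 (Eventually.of_forall hbound))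
      _ = (∫ y in Ω, ‖B y‖) / (‖x‖ - R) ^ 2 := integral_div _ _
      _ ≤ (∫ y, ‖B y‖) / (‖x‖ - R) ^ 2 := by
          gcongr ?_ / _
          exact setIntegral_le_integral hB.norm (Eventually.of_forall fun _ => norm_nonneg _)
  rw [biotSavart, norm_smul, Real.norm_of_nonneg (by positivity)]
  gcongr

lemma tendsto_inv_norm_sub_sq_cocompact {E : Type*} [NormedAddCommGroup E] [ProperSpace E]
    (R : ℝ) : Tendsto (fun x : E => 1 / (‖x‖ - R) ^ 2) (cocompact E) (𝓝 0) := by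
  have hshift : Tendsto (fun x : E => ‖x‖ - R) (cocompact E) atTop :=
    tendsto_atTop_add_const_right _ (-R) tendsto_norm_cocompact_atTop
  simpa using ((tendsto_inv_atTop_zero.comp hshift).pow 2)

-- The potential is dominated by `(∫ ‖B‖) / (‖x‖ - R)²` once `‖x‖ > R ≥ sup_Ω ‖y‖`.
theorem biotSavart_tendsto_zero_general (Ω : Set (EuclideanSpace ℝ (Fin 3)))
    (hΩ : MeasurableSet Ω) (hΩb : Bornology.IsBounded Ω)
    (B : EuclideanSpace ℝ (Fin 3) → EuclideanSpace ℝ (Fin 3))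
    (hB : Integrable B) :
    Filter.Tendsto (biotSavart Ω B)
      (Filter.cocompact (EuclideanSpace ℝ (Fin 3))) (nhds 0) := by
  obtain ⟨R, hR⟩ := hΩb.subset_closedBall 0
  have hdecay := ((tendsto_inv_norm_sub_sq_cocompact (E := ℝ³) R).const_mul
    (∫ y, ‖B y‖)).const_mul (1 / (4 * Real.pi))
  simp only [mul_zero, mul_one_div] at hdecay
  refine squeeze_zero_norm' ?_ hdecay
  filter_upwards [tendsto_norm_cocompact_atTop.eventually_gt_atTop R] with x hx
  exact norm_biotSavart_le hΩ hR hB hx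

/-- Decay of the Biot–Savart vector potential at infinity. -/
theorem biotSavart_tendsto_zero (Ω : Set (EuclideanSpace ℝ (Fin 3)))
    (hΩ : MeasurableSet Ω) (hΩb : Bornology.IsBounded Ω)
    (B : EuclideanSpace ℝ (Fin 3) → EuclideanSpace ℝ (Fin 3))
    (hB : Integrable B) (hB0 : ∀ x ∉ Ω, B x = 0) :
    Filter.Tendsto (biotSavart Ω B)
      (Filter.cocompact (EuclideanSpace ℝ (Fin 3))) (nhds 0) :=
  biotSavart_tendsto_zero_general Ω hΩ hΩb B hB

end
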